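/- In $\U(t^{-1}\gl_N[t^{-1}])\otimes\CC[\tau]$, the Harish-Chandra projection (setting to zero all monomials containing off-diagonal generators $E_{ij}[r]$, $i\neq j$, modulo the left ideal generated by lower-triangular modes and right ideal by upper-triangular modes) of $\cdet(\tau + E[-1])$ equals the ordered product $(\tau + E_{NN}[-1])(\tau + E_{N-1,N-1}[-1])\cdots(\tau + E_{11}[-1])$. -/

import Mathlib

/-
A Manin matrix (`[M a x, M b y] = [M b x, M a y]` for all indices) has a column determinant that
does not depend on the order in which the columns are read: exchanging two adjacent columns
changes the signed sum by terms that cancel in pairs `σ`, `σ * swap x y`. The relations of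
`t⁻¹𝔤𝔩_N[t⁻¹] ⊕ ℂτ` make `τ + E[-1]` a Manin matrix, so `cdet(τ + E[-1])` may be computed with
the columns in decreasing order `N, …, 1`. The identity permutation then contributes the ordered
diagonal product. For `σ ≠ 1` let `m` be the smallest index moved by `σ`; then `σ m > m` and the
monomial is `(…) · E_{σ m, m}[-1] · ∏_{j < m} (τ + E_{jj}[-1])`. Moving the lower-triangular mode
to the right across the diagonal factors only produces the modes `E_{σ m, m}[r]`, `r < 0`, so the
monomial lies in the left ideal they generate.
-/

/-- Column determinant over a noncommutative ring. -/
noncomputable def cdet {R : Type*} [Ring R] (N : ℕ) (M : Fin N → Fin N → R) : R :=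
  ∑ σ : Equiv.Perm (Fin N),
    (Equiv.Perm.sign σ : ℤ) • ((List.finRange N).map (fun j => M (σ j) j)).prod

section

variable {R ι : Type*} [Ring R]

def IsManin (M : ι → ι → R) : Prop :=
  ∀ a x b y, M a x * M b y - M b y * M a x = M b x * M a y - M a y * M b x

section ColDet

variable [DecidableEq ι]

theorem prod_map_mul_swap (M : ι → ι → R) (σ : Equiv.Perm ι) {x y : ι} {l : List ι}
    (hx : x ∉ l) (hy : y ∉ l) :
    (l.map fun j => M ((σ * Equiv.swap x y) j) j).prod = (l.map fun j => M (σ j) j).prod := by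
  refine congrArg _ (List.map_congr_left fun j hj => ?_)
  rw [Equiv.Perm.mul_apply, Equiv.swap_apply_of_ne_of_ne (ne_of_mem_of_not_mem hj hx)
    (ne_of_mem_of_not_mem hj hy)]

variable [Fintype ι]

noncomputable def colDet (M : ι → ι → R) (l : List ι) : R :=
  ∑ σ : Equiv.Perm ι, (Equiv.Perm.sign σ : ℤ) • (l.map fun j => M (σ j) j).prod

theorem cdet_eq_colDet_finRange {N : ℕ} (M : Fin N → Fin N → R) :
    cdet N M = colDet M (List.finRange N) :=
  rfl

theorem IsManin.colDet_swap {M : ι → ι → R} (hM : IsManin M) {p s : List ι} {x y : ι}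
    (hnd : (p ++ x :: y :: s).Nodup) :
    colDet M (p ++ x :: y :: s) = colDet M (p ++ y :: x :: s) := by
  simp only [List.nodup_append, List.nodup_cons, List.mem_cons, not_or] at hnd
  obtain ⟨-, ⟨⟨hxy, hxs⟩, hys, -⟩, hp⟩ := hnd
  have hxp : x ∉ p := fun h => hp x h x (Or.inl rfl) rfl
  have hyp : y ∉ p := fun h => hp y h y (Or.inr (Or.inl rfl)) rfl
  have hterm : ∀ σ : Equiv.Perm ι,
      (Equiv.Perm.sign σ : ℤ) • ((p ++ x :: y :: s).map fun j => M (σ j) j).prod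
        - (Equiv.Perm.sign σ : ℤ) • ((p ++ y :: x :: s).map fun j => M (σ j) j).prod
      = (Equiv.Perm.sign σ : ℤ) • ((p.map fun j => M (σ j) j).prod
        * ((M (σ x) x * M (σ y) y - M (σ y) y * M (σ x) x)
          * (s.map fun j => M (σ j) j).prod)) := by
    intro σ
    simp only [List.map_append, List.map_cons, List.prod_append, List.prod_cons, ← smul_sub]
    noncomm_ring
  rw [← sub_eq_zero, colDet, colDet, ← Finset.sum_sub_distrib]
  simp_rw [hterm]
  refine Finset.sum_ninvolution (fun σ => σ * Equiv.swap x y) (fun σ => ?_) (fun σ _ => ?_)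
    (fun _ => Finset.mem_univ _) (fun σ => by simp [mul_assoc])
  · rw [prod_map_mul_swap M σ hxp hyp, prod_map_mul_swap M σ hxs hys, Equiv.Perm.mul_apply,
      Equiv.Perm.mul_apply, Equiv.swap_apply_left, Equiv.swap_apply_right, Equiv.Perm.sign_mul,
      Equiv.Perm.sign_swap hxy, hM (σ x) x (σ y) y]
    simp
  · simpa using hxy

theorem IsManin.colDet_perm {M : ι → ι → R} (hM : IsManin M) {l l' : List ι} (h : l.Perm l')
    (hl : l.Nodup) : colDet M l = colDet M l' := by
  suffices H : ∀ p, (p ++ l).Nodup → colDet M (p ++ l) = colDet M (p ++ l') by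
    simpa using H [] hl
  clear hl
  induction h with
  | nil => exact fun _ _ => rfl
  | cons a _ ih =>
    intro p hnd
    simpa using ih (p ++ [a]) (by simpa using hnd)
  | swap x y s => exact fun p hnd => hM.colDet_swap hnd
  | trans h₁ _ ih₁ ih₂ =>
    exact fun p hnd => (ih₁ p hnd).trans (ih₂ p ((h₁.append_left p).nodup_iff.mp hnd))

end ColDet

theorem exists_moved_forall_lt_fixed [LinearOrder ι] [Fintype ι] {σ : Equiv.Perm ι}
    (hσ : σ ≠ 1) :
    ∃ m, σ m ≠ m ∧ ∀ j < m, σ j = j := by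
  have hne : σ.support.Nonempty :=
    Finset.nonempty_iff_ne_empty.2 (mt Equiv.Perm.support_eq_empty_iff.1 hσ)
  refine ⟨σ.support.min' hne, Equiv.Perm.mem_support.1 (σ.support.min'_mem hne), fun j hj => ?_⟩
  by_contra h
  exact (σ.support.min'_le j (Equiv.Perm.mem_support.2 h)).not_gt hj

section LoopAlgebra

variable [DecidableEq ι] {τ : R} {E : ι → ι → ℤ → R}
  (hE : ∀ (i j k l : ι) (r s : ℤ), r < 0 → s < 0 →
    E i j r * E k l s - E k l s * E i j r =
      (if k = j then E i l (r + s) else 0) - (if i = l then E k j (r + s) else 0))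
  (hτ : ∀ (i j : ι) (r : ℤ), r < 0 → τ * E i j r - E i j r * τ = (-r) • E i j (r - 1))
include hE hτ

theorem isManin_tau_add_E : IsManin fun i j => (if i = j then τ else 0) + E i j (-1) := by
  have hτE : ∀ (c : Prop) [Decidable c] (i j : ι), (if c then τ else 0) * E i j (-1)
      - E i j (-1) * (if c then τ else 0) = if c then E i j (-2) else 0 := by
    intro c _ i j
    split_ifs
    · simpa using hτ i j (-1) (by norm_num)
    · simp
  have hττ : ∀ (c d : Prop) [Decidable c] [Decidable d],
      (if c then τ else 0) * (if d then τ else 0)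
        = (if d then τ else 0) * (if c then τ else 0) := by
    intro c d _ _
    split_ifs <;> simp
  have key : ∀ a x b y,
      ((if a = x then τ else 0) + E a x (-1)) * ((if b = y then τ else 0) + E b y (-1))
        - ((if b = y then τ else 0) + E b y (-1)) * ((if a = x then τ else 0) + E a x (-1))
      = (if a = x then E b y (-2) else 0) - (if b = y then E a x (-2) else 0)
        + ((if b = x then E a y (-2) else 0) - (if a = y then E b x (-2) else 0)) := by
    intro a x b y
    have hEE := hE a x b y (-1) (-1) (by norm_num) (by norm_num)
    norm_num at hEE
    set u := if a = x then τ else 0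
    set v := if b = y then τ else 0
    calc _ = (u * v - v * u) + (u * E b y (-1) - E b y (-1) * u)
          - (v * E a x (-1) - E a x (-1) * v)
          + (E a x (-1) * E b y (-1) - E b y (-1) * E a x (-1)) := by noncomm_ring
      _ = _ := by rw [hττ, sub_self, hτE, hτE, hEE]; abel
  intro a x b y
  rw [key, key]
  abel

theorem E_mul_tau_add_E_diag {a b c : ι} (hca : c ≠ a) (hcb : c ≠ b) {r : ℤ} (hr : r < 0) :
    E a b r * (τ + E c c (-1)) = (τ + E c c (-1)) * E a b r + r • E a b (r - 1) := by
  have hEc := hE a b c c r (-1) hr (by norm_num)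
  rw [if_neg hcb, if_neg hca.symm, sub_self, sub_eq_zero] at hEc
  have hEτ : r • E a b (r - 1) = E a b r * τ - τ * E a b r := by
    rw [← neg_sub (τ * E a b r), hτ a b r hr, neg_smul, neg_neg]
  rw [mul_add, add_mul, hEc, hEτ]
  abel

theorem E_mul_prod_diag_mem (J : Ideal R) {a b : ι} (hJ : ∀ r < 0, E a b r ∈ J) {l : List ι}
    (ha : a ∉ l) (hb : b ∉ l) {r : ℤ} (hr : r < 0) :
    E a b r * (l.map fun c => τ + E c c (-1)).prod ∈ J := by
  induction l generalizing r with
  | nil => simpa using hJ r hr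
  | cons c t ih =>
    rw [List.mem_cons, not_or] at ha hb
    rw [List.map_cons, List.prod_cons, ← mul_assoc,
      E_mul_tau_add_E_diag hE hτ (Ne.symm ha.1) (Ne.symm hb.1) hr, add_mul, mul_assoc,
      smul_mul_assoc]
    exact J.add_mem (J.mul_mem_left _ (ih ha.2 hb.2 hr))
      (J.smul_of_tower_mem r (ih ha.2 hb.2 (by omega)))

end LoopAlgebra

section OrderedLoopAlgebra

variable [LinearOrder ι] {τ : R} {E : ι → ι → ℤ → R}
  (hE : ∀ (i j k l : ι) (r s : ℤ), r < 0 → s < 0 →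
    E i j r * E k l s - E k l s * E i j r =
      (if k = j then E i l (r + s) else 0) - (if i = l then E k j (r + s) else 0))
  (hτ : ∀ (i j : ι) (r : ℤ), r < 0 → τ * E i j r - E i j r * τ = (-r) • E i j (r - 1))
include hE hτ

theorem prod_mem_of_forall_lt_fixed (J : Ideal R)
    (hJ : ∀ a b r, b < a → r < 0 → E a b r ∈ J) {l : List ι} (hl : l.Pairwise (· > ·))
    {σ : Equiv.Perm ι} {m : ι} (hm : m ∈ l) (hσm : σ m ≠ m) (hmin : ∀ j < m, σ j = j) :
    (l.map fun j => (if σ j = j then τ else 0) + E (σ j) j (-1)).prod ∈ J := by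
  obtain ⟨s, t, rfl⟩ := List.append_of_mem hm
  have hlt : ∀ j ∈ t, j < m := (List.pairwise_cons.1 (List.pairwise_append.1 hl).2.1).1
  have hmσ : m < σ m :=
    lt_of_le_of_ne (not_lt.1 fun h => hσm (σ.injective (hmin _ h))) hσm.symm
  have hdiag : (t.map fun j => (if σ j = j then τ else 0) + E (σ j) j (-1)) =
      t.map fun j => τ + E j j (-1) :=
    List.map_congr_left fun j hj => by rw [hmin j (hlt j hj), if_pos rfl]
  rw [List.map_append, List.prod_append, List.map_cons, List.prod_cons, if_neg hσm, zero_add,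
    hdiag]
  exact J.mul_mem_left _ (E_mul_prod_diag_mem hE hτ J (fun r hr => hJ _ _ r hmσ hr)
    (fun h => lt_asymm (hlt _ h) hmσ) (fun h => lt_irrefl m (hlt m h)) (by norm_num))

end OrderedLoopAlgebra

end

/-- the Harish-Chandra projection of `cdet(τ + E[-1])` is the ordered product
`(τ + E_{NN}[-1]) ⋯ (τ + E_{11}[-1])`.  Equivalently, the difference
`cdet(τ + E[-1]) - (τ + E_{NN}[-1]) ⋯ (τ + E_{11}[-1])` lies in the left ideal generated by
the lower-triangular modes `E_{ij}[r]`, `i > j`, `r < 0`, along which the Harish-Chandra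
homomorphism projects. -/
theorem cdet_HC_image {R : Type*} [Ring R] (N : ℕ) (τ : R)
    (E : Fin N → Fin N → ℤ → R)
    (hE : ∀ (i j k l : Fin N) (r s : ℤ), r < 0 → s < 0 →
      E i j r * E k l s - E k l s * E i j r =
        (if k = j then E i l (r + s) else 0) - (if i = l then E k j (r + s) else 0))
    (hτ : ∀ (i j : Fin N) (r : ℤ), r < 0 →
      τ * E i j r - E i j r * τ = (-r) • E i j (r - 1)) :
    cdet N (fun i j => (if i = j then τ else 0) + E i j (-1))
      - ((List.finRange N).reverse.map (fun i => τ + E i i (-1))).prod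
    ∈ Submodule.span R {x : R | ∃ (i j : Fin N) (r : ℤ), j < i ∧ r < 0 ∧ x = E i j r} := by
  rw [cdet_eq_colDet_finRange, (isManin_tau_add_E hE hτ).colDet_perm
    (List.reverse_perm _).symm (List.nodup_finRange N), colDet,
    ← Finset.add_sum_erase _ _ (Finset.mem_univ 1)]
  simp only [Equiv.Perm.coe_one, id_eq, if_true, Equiv.Perm.sign_one, Units.val_one, one_smul,
    add_sub_cancel_left]
  refine Submodule.sum_mem _ fun σ hσ => zsmul_mem ?_ _
  obtain ⟨m, hσm, hmin⟩ := exists_moved_forall_lt_fixed (Finset.ne_of_mem_erase hσ)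
  refine prod_mem_of_forall_lt_fixed hE hτ _ ?_
    (List.pairwise_reverse.2 (List.pairwise_lt_finRange N))
    (List.mem_reverse.2 (List.mem_finRange m)) hσm hmin
  exact fun a b r hba hr => Submodule.subset_span ⟨a, b, r, hba, hr, rfl⟩
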